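/- Let d : ℕ → ℝ be a real sequence. Each of the following three conditions is equivalent to (∗): (a) for every real sequence x with sup_n |(Ax)_n| < ∞, the series Σ_n |d_n·x_n| converges; (b) for every x with lim_n (Ax)_n existing, the series Σ_n |d_n·x_n| converges; (c) for every x with (Ax)_n → 0, the series Σ_n |d_n·x_n| converges; where (∗) states: there exists M ∈ ℝ such that for every finite set K ⊆ ℕ the series Σ_n |Σ_{k∈K} d_n·C(n,k)| converges with sum at most M. In particular, the α-duals of the three spaces {x : Ax ∈ c₀}, {x : Ax ∈ c}, {x : Ax ∈ ℓ∞} coincide. -/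

import Mathlib

/-!
Since `A` and `C` are mutually inverse lower-triangular matrices, `x ↦ y = Ax` is a bijection of
sequences with `d_n x_n = Σ_k d_n C(n,k) y_k`; so each condition says that the lower-triangular
matrix `b(n,k) = d_n C(n,k)` maps `ℓ∞`, `c` or `c₀` into `ℓ¹`. If `b` maps `c₀` into `ℓ¹`, the
closed graph theorem makes this map bounded, and testing it on the indicators of finite sets `K`
gives `(∗)`. Conversely, given `(∗)` with bound `M` and `|y_k| ≤ c`, choosing signs
`ε_n = sign (Σ_k b(n,k) y_k)` and splitting the columns by the sign of `Σ_n ε_n b(n,k)` bounds every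
partial sum of `Σ_n |Σ_k b(n,k) y_k|` by `2Mc`.
-/

open Filter Topology

/-- `λ_{k−1}` with the convention `λ_{−1} := 0`. -/
noncomputable def lamPrev (lam : ℕ → ℝ) (k : ℕ) : ℝ := if k = 0 then 0 else lam (k - 1)

/-- Entries of the product matrix `A = Λ(B^{r,s}(Δ^{α̃}))`:
`A(n,k) = Σ_{i=k}^{n} ((λ_i − λ_{i−1})/λ_n)·(1/(s+r)^n)·C(n,i)·s^{n−i}·r^{i}·
(−1)^{i−k}·Γ(α̃+1)/((i−k)!·Γ(α̃−i+k+1))` for `k ≤ n` and `0` for `k > n`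
(the `Finset.Icc k n` sum is empty when `k > n`). -/
noncomputable def Amat (r s α : ℝ) (lam : ℕ → ℝ) (n k : ℕ) : ℝ :=
  ∑ i ∈ Finset.Icc k n,
    ((lam i - lamPrev lam i) / lam n) * (1 / (s + r) ^ n) * (n.choose i : ℝ) *
      s ^ (n - i) * r ^ i * (-1 : ℝ) ^ (i - k) *
      (Real.Gamma (α + 1) /
        ((Nat.factorial (i - k) : ℝ) * Real.Gamma (α - (i : ℝ) + (k : ℝ) + 1)))

/-- The `A`-transform of a real sequence `x`: `(Ax)_n = Σ_{k=0}^{n} A(n,k)·x_k`. -/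
noncomputable def Atr (r s α : ℝ) (lam : ℕ → ℝ) (x : ℕ → ℝ) (n : ℕ) : ℝ :=
  ∑ k ∈ Finset.range (n + 1), Amat r s α lam n k * x k

open Finset
open scoped ZeroAtInfty

noncomputable def lowerTransform (a : ℕ → ℕ → ℝ) (x : ℕ → ℝ) (n : ℕ) : ℝ :=
  ∑ k ∈ range (n + 1), a n k * x k

def BlockSumsBounded (b : ℕ → ℕ → ℝ) : Prop :=
  ∃ M, ∀ K : Finset ℕ,
    (Summable fun n => |∑ k ∈ K, b n k|) ∧ ∑' n, |∑ k ∈ K, b n k| ≤ M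

section LowerTriangular

variable {a c : ℕ → ℕ → ℝ} (ha : ∀ n k, n < k → a n k = 0)
include ha

theorem lowerTransform_eq_sum_range (x : ℕ → ℝ) {n N : ℕ} (hn : n < N) :
    lowerTransform a x n = ∑ k ∈ range N, a n k * x k :=
  sum_subset (range_subset_range.2 hn) fun k _ hk => by
    rw [ha n k (by simpa using hk), zero_mul]

theorem lowerTransform_boole (K : Finset ℕ) (n : ℕ) :
    lowerTransform a (fun k => if k ∈ K then 1 else 0) n = ∑ k ∈ K, a n k := by
  simp only [lowerTransform, mul_ite, mul_one, mul_zero, sum_ite_mem]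
  exact sum_subset inter_subset_right fun k hkK hk => ha n k <| by
    by_contra! hkn
    exact hk (mem_inter.2 ⟨mem_range.2 (Nat.lt_succ_of_le hkn), hkK⟩)

theorem lowerTransform_lowerTransform
    (hca : ∀ n k, ∑ i ∈ range (max n k + 1), c n i * a i k = if n = k then 1 else 0)
    (x : ℕ → ℝ) : lowerTransform c (lowerTransform a x) = x := by
  funext n
  calc lowerTransform c (lowerTransform a x) n
      = ∑ k ∈ range (n + 1), ∑ j ∈ range (n + 1), c n k * (a k j * x j) :=
        sum_congr rfl fun k hk => by
          rw [lowerTransform_eq_sum_range ha x (mem_range.1 hk), mul_sum]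
    _ = ∑ j ∈ range (n + 1), (∑ k ∈ range (n + 1), c n k * a k j) * x j := by
        rw [sum_comm]
        simp only [sum_mul, mul_assoc]
    _ = ∑ j ∈ range (n + 1), (if n = j then 1 else 0) * x j :=
        sum_congr rfl fun j hj => by
          rw [← hca n j, max_eq_left (Nat.le_of_lt_succ (mem_range.1 hj))]
    _ = x n := by simp

end LowerTriangular

theorem forall_summable_abs_mul_iff {a c : ℕ → ℕ → ℝ} (d : ℕ → ℝ)
    (hca : ∀ x, lowerTransform c (lowerTransform a x) = x)
    (hac : ∀ y, lowerTransform a (lowerTransform c y) = y) (P : (ℕ → ℝ) → Prop) :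
    (∀ x, P (lowerTransform a x) → Summable fun n => |d n * x n|) ↔
      ∀ y, P y → Summable fun n => |lowerTransform (fun n k => d n * c n k) y n| := by
  have hmul : ∀ y n, lowerTransform (fun n k => d n * c n k) y n = d n * lowerTransform c y n :=
    fun y n => by simp only [lowerTransform, mul_sum, mul_assoc]
  simp only [hmul]
  exact ⟨fun H y hy => H _ ((hac y).symm ▸ hy), fun H x hx => hca x ▸ H _ hx⟩

theorem sum_abs_le_two_mul_of_abs_sum_le {ι : Type*} {G : Finset ι} {β : ι → ℝ} {M : ℝ}
    (h : ∀ K ⊆ G, |∑ k ∈ K, β k| ≤ M) : ∑ k ∈ G, |β k| ≤ 2 * M := by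
  classical
  rw [← sum_filter_add_sum_filter_not G (fun k => 0 ≤ β k), two_mul]
  gcongr
  · rw [sum_congr rfl fun k hk => abs_of_nonneg (mem_filter.1 hk).2]
    exact (le_abs_self _).trans (h _ (filter_subset _ _))
  · rw [sum_congr rfl fun k hk => abs_of_neg (not_le.1 (mem_filter.1 hk).2), sum_neg_distrib]
    exact (neg_le_abs _).trans (h _ (filter_subset _ _))

theorem sum_abs_sum_mul_le {ι κ : Type*} {F : Finset ι} {G : Finset κ} {b : ι → κ → ℝ}
    {y : κ → ℝ} {c M : ℝ} (hc : 0 ≤ c) (hy : ∀ k ∈ G, |y k| ≤ c)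
    (hM : ∀ K ⊆ G, ∑ n ∈ F, |∑ k ∈ K, b n k| ≤ M) :
    ∑ n ∈ F, |∑ k ∈ G, b n k * y k| ≤ 2 * M * c := by
  set ε : ι → ℝ := fun n => SignType.sign (∑ k ∈ G, b n k * y k)
  set β : κ → ℝ := fun k => ∑ n ∈ F, ε n * b n k
  have hε : ∀ n, |ε n| ≤ 1 := fun n => by
    simp only [ε]
    generalize SignType.sign (∑ k ∈ G, b n k * y k) = s
    rcases s with _ | _ | _ <;> simp
  have hβ : ∀ K ⊆ G, |∑ k ∈ K, β k| ≤ M := fun K hK => calc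
    |∑ k ∈ K, β k| = |∑ n ∈ F, ε n * ∑ k ∈ K, b n k| := by
        simp only [β, mul_sum]
        rw [sum_comm]
    _ ≤ ∑ n ∈ F, |∑ k ∈ K, b n k| := (abs_sum_le_sum_abs _ _).trans <| sum_le_sum fun n _ => by
        rw [abs_mul]
        exact mul_le_of_le_one_left (abs_nonneg _) (hε n)
    _ ≤ M := hM K hK
  calc ∑ n ∈ F, |∑ k ∈ G, b n k * y k|
      = ∑ n ∈ F, ε n * ∑ k ∈ G, b n k * y k := by simp only [ε, sign_mul_self]
    _ = ∑ k ∈ G, β k * y k := by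
        simp only [β, mul_sum, sum_mul, mul_assoc]
        exact sum_comm
    _ ≤ ∑ k ∈ G, |β k| * c := sum_le_sum fun k hk =>
        (le_abs_self _).trans <| (abs_mul _ _).trans_le <|
          mul_le_mul_of_nonneg_left (hy k hk) (abs_nonneg _)
    _ ≤ 2 * M * c := by
        rw [← sum_mul]
        exact mul_le_mul_of_nonneg_right (sum_abs_le_two_mul_of_abs_sum_le hβ) hc

theorem summable_abs_lowerTransform_of_blockSumsBounded {b : ℕ → ℕ → ℝ}
    (hb : ∀ n k, n < k → b n k = 0) (hB : BlockSumsBounded b) {y : ℕ → ℝ} {c : ℝ}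
    (hy : ∀ k, |y k| ≤ c) : Summable fun n => |lowerTransform b y n| := by
  obtain ⟨M, hM⟩ := hB
  refine summable_of_sum_range_le (c := 2 * M * c) (fun n => abs_nonneg _) fun N => ?_
  calc ∑ n ∈ range N, |lowerTransform b y n|
      = ∑ n ∈ range N, |∑ k ∈ range N, b n k * y k| :=
        sum_congr rfl fun n hn => by rw [lowerTransform_eq_sum_range hb y (mem_range.1 hn)]
    _ ≤ 2 * M * c := sum_abs_sum_mul_le ((abs_nonneg _).trans (hy 0)) (fun k _ => hy k) fun K _ =>
        ((hM K).1.sum_le_tsum _ fun _ _ => abs_nonneg _).trans (hM K).2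

namespace ZeroAtInftyContinuousMap

variable {β : Type*} [TopologicalSpace β] [Zero β]

theorem tendsto_atTop_nat (y : C₀(ℕ, β)) : Tendsto y atTop (𝓝 0) :=
  cocompact_eq_atTop (α := ℕ) ▸ y.zero_at_infty'

def ofTendstoAtTop (y : ℕ → β) (hy : Tendsto y atTop (𝓝 0)) : C₀(ℕ, β) :=
  ⟨⟨y, continuous_of_discreteTopology⟩, cocompact_eq_atTop (α := ℕ) ▸ hy⟩

end ZeroAtInftyContinuousMap

section ClosedGraph
variable {b : ℕ → ℕ → ℝ}
  (h : ∀ y, Tendsto y atTop (𝓝 0) → Summable fun n => |lowerTransform b y n|)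
include h

noncomputable def lowerTransformC₀ : C₀(ℕ, ℝ) →ₗ[ℝ] lp (fun _ : ℕ => ℝ) 1 where
  toFun y := ⟨lowerTransform b y, memℓp_gen (by simpa using h y y.tendsto_atTop_nat)⟩
  map_add' y z := by
    ext n
    show lowerTransform b (y + z) n = lowerTransform b y n + lowerTransform b z n
    simp [lowerTransform, mul_add, sum_add_distrib]
  map_smul' c y := by
    ext n
    simp [lowerTransform, mul_sum, mul_left_comm]

theorem continuous_lowerTransformC₀ : Continuous (lowerTransformC₀ h) := by
  refine LinearMap.continuous_of_seq_closed_graph _ fun u x z hu hz => lp.ext (funext fun n => ?_)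
  have hz_n : Tendsto (fun m => lowerTransform b (u m) n) atTop (𝓝 (z n)) :=
    ((lp.evalCLM ℝ (fun _ : ℕ => ℝ) 1 n).continuous.tendsto z).comp hz
  have hx_n : Tendsto (fun m => lowerTransform b (u m) n) atTop (𝓝 (lowerTransform b x n)) :=
    tendsto_finsetSum _ fun k _ => (((continuous_eval_const k).comp
      ZeroAtInftyContinuousMap.isometry_toBCF.continuous).tendsto x |>.comp hu).const_mul _
  exact tendsto_nhds_unique hz_n hx_n

theorem exists_tsum_abs_lowerTransform_le :
    ∃ M, ∀ y, Tendsto y atTop (𝓝 0) → ∀ c, (∀ k, |y k| ≤ c) →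
      ∑' n, |lowerTransform b y n| ≤ M * c := by
  set T : C₀(ℕ, ℝ) →L[ℝ] lp (fun _ : ℕ => ℝ) 1 := ⟨_, continuous_lowerTransformC₀ h⟩
  refine ⟨‖T‖, fun y hy c hc => ?_⟩
  set y₀ := ZeroAtInftyContinuousMap.ofTendstoAtTop y hy
  have hT : ‖T y₀‖ = ∑' n, |lowerTransform b y n| := by
    rw [lp.norm_eq_tsum_rpow (by simp)]
    simp [T, y₀, lowerTransformC₀, ZeroAtInftyContinuousMap.ofTendstoAtTop]
  have hy₀ : ‖y₀‖ ≤ c := by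
    rw [← ZeroAtInftyContinuousMap.norm_toBCF_eq_norm]
    exact (BoundedContinuousFunction.norm_le ((abs_nonneg _).trans (hc 0))).2 hc
  calc ∑' n, |lowerTransform b y n| = ‖T y₀‖ := hT.symm
    _ ≤ ‖T‖ * ‖y₀‖ := T.le_opNorm y₀
    _ ≤ ‖T‖ * c := by gcongr

end ClosedGraph

theorem blockSumsBounded_of_summable_abs_lowerTransform {b : ℕ → ℕ → ℝ}
    (hb : ∀ n k, n < k → b n k = 0)
    (h : ∀ y, Tendsto y atTop (𝓝 0) → Summable fun n => |lowerTransform b y n|) :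
    BlockSumsBounded b := by
  obtain ⟨M, hM⟩ := exists_tsum_abs_lowerTransform_le h
  refine ⟨M, fun K => ?_⟩
  set χ : ℕ → ℝ := fun k => if k ∈ K then 1 else 0
  have hχ : Tendsto χ atTop (𝓝 0) := by
    obtain ⟨N, hN⟩ := K.exists_nat_subset_range
    refine tendsto_const_nhds.congr' (eventually_atTop.2 ⟨N, fun k hk => ?_⟩)
    have hkK : k ∉ K := fun hkK => not_lt.2 hk (mem_range.1 (hN hkK))
    simp [χ, hkK]
  have hχ_le : ∀ k, |χ k| ≤ 1 := fun k => by by_cases hk : k ∈ K <;> simp [χ, hk]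
  simp only [← lowerTransform_boole hb K]
  exact ⟨h χ hχ, (hM χ hχ 1 hχ_le).trans_eq (mul_one M)⟩

theorem forall_summable_abs_lowerTransform_iff {b : ℕ → ℕ → ℝ}
    (hb : ∀ n k, n < k → b n k = 0) {P : (ℕ → ℝ) → Prop}
    (hP_of_tendsto : ∀ y, Tendsto y atTop (𝓝 0) → P y)
    (hP_bounded : ∀ y, P y → ∃ c, ∀ k, |y k| ≤ c) :
    (∀ y, P y → Summable fun n => |lowerTransform b y n|) ↔ BlockSumsBounded b := by
  refine ⟨fun h => blockSumsBounded_of_summable_abs_lowerTransform hb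
    fun y hy => h y (hP_of_tendsto y hy), fun hB y hy => ?_⟩
  obtain ⟨c, hc⟩ := hP_bounded y hy
  exact summable_abs_lowerTransform_of_blockSumsBounded hb hB hc

theorem alpha_duals_general (r s α : ℝ) (lam : ℕ → ℝ)
    (C : ℕ → ℕ → ℝ) (hCtri : ∀ n k : ℕ, n < k → C n k = 0)
    (hAC : ∀ n k : ℕ, (∑ i ∈ Finset.range (max n k + 1), Amat r s α lam n i * C i k)
        = if n = k then 1 else 0)
    (hCA : ∀ n k : ℕ, (∑ i ∈ Finset.range (max n k + 1), C n i * Amat r s α lam i k)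
        = if n = k then 1 else 0)
    (d : ℕ → ℝ) :
    ((∀ x : ℕ → ℝ, (∃ M : ℝ, ∀ n, |Atr r s α lam x n| ≤ M) →
        Summable fun n => |d n * x n|) ↔
      (∃ M : ℝ, ∀ K : Finset ℕ,
        (Summable fun n => |∑ k ∈ K, d n * C n k|) ∧
          (∑' n, |∑ k ∈ K, d n * C n k|) ≤ M)) ∧
    ((∀ x : ℕ → ℝ, (∃ l : ℝ, Tendsto (Atr r s α lam x) atTop (nhds l)) →
        Summable fun n => |d n * x n|) ↔
      (∃ M : ℝ, ∀ K : Finset ℕ,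
        (Summable fun n => |∑ k ∈ K, d n * C n k|) ∧
          (∑' n, |∑ k ∈ K, d n * C n k|) ≤ M)) ∧
    ((∀ x : ℕ → ℝ, Tendsto (Atr r s α lam x) atTop (nhds 0) →
        Summable fun n => |d n * x n|) ↔
      (∃ M : ℝ, ∀ K : Finset ℕ,
        (Summable fun n => |∑ k ∈ K, d n * C n k|) ∧
          (∑' n, |∑ k ∈ K, d n * C n k|) ≤ M)) := by
  have hA : ∀ n k, n < k → Amat r s α lam n k = 0 := fun n k hnk => by
    simp [Amat, Finset.Icc_eq_empty_of_lt hnk]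
  have hb : ∀ n k, n < k → d n * C n k = 0 := fun n k hnk => by rw [hCtri n k hnk, mul_zero]
  have transfer := forall_summable_abs_mul_iff d (lowerTransform_lowerTransform hA hCA)
    (lowerTransform_lowerTransform hCtri hAC)
  have bounded_of_tendsto : ∀ (y : ℕ → ℝ) l, Tendsto y atTop (𝓝 l) → ∃ c, ∀ k, |y k| ≤ c :=
    fun y l hy => by
      obtain ⟨c, hc⟩ := hy.abs.bddAbove_range
      exact ⟨c, fun k => hc (Set.mem_range_self k)⟩
  refine ⟨(transfer fun y => ∃ M, ∀ n, |y n| ≤ M).trans ?_,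
    (transfer fun y => ∃ l, Tendsto y atTop (𝓝 l)).trans ?_,
    (transfer fun y => Tendsto y atTop (𝓝 0)).trans ?_⟩
  · exact forall_summable_abs_lowerTransform_iff hb (bounded_of_tendsto · 0) fun _ hy => hy
  · exact forall_summable_abs_lowerTransform_iff hb (fun _ hy => ⟨0, hy⟩)
      fun y ⟨l, hl⟩ => bounded_of_tendsto y l hl
  · exact forall_summable_abs_lowerTransform_iff hb (fun _ hy => hy) (bounded_of_tendsto · 0)

/-- for a real sequence `d`, each of the conditions
(a) `Σ_n |d_n·x_n| < ∞` for all `x` with `Ax ∈ ℓ∞`,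
(b) `Σ_n |d_n·x_n| < ∞` for all `x` with `Ax ∈ c`,
(c) `Σ_n |d_n·x_n| < ∞` for all `x` with `Ax ∈ c₀`,
is equivalent to (∗): there is `M` such that for every finite `K ⊆ ℕ` the series
`Σ_n |Σ_{k∈K} d_n·C(n,k)|` converges with sum at most `M`. In particular the
α-duals of the three spaces coincide. -/
theorem alpha_duals (r s α : ℝ) (lam : ℕ → ℝ)
    (hr : r ≠ 0) (hsr : s + r ≠ 0) (hα : 0 < α) (hαint : ∀ m : ℤ, α ≠ (m : ℝ))
    (hlam0 : 0 < lam 0) (hmono : StrictMono lam) (hlam : Tendsto lam atTop atTop)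
    (C : ℕ → ℕ → ℝ) (hCtri : ∀ n k : ℕ, n < k → C n k = 0)
    (hAC : ∀ n k : ℕ, (∑ i ∈ Finset.range (max n k + 1), Amat r s α lam n i * C i k)
        = if n = k then 1 else 0)
    (hCA : ∀ n k : ℕ, (∑ i ∈ Finset.range (max n k + 1), C n i * Amat r s α lam i k)
        = if n = k then 1 else 0)
    (d : ℕ → ℝ) :
    ((∀ x : ℕ → ℝ, (∃ M : ℝ, ∀ n, |Atr r s α lam x n| ≤ M) →
        Summable fun n => |d n * x n|) ↔
      (∃ M : ℝ, ∀ K : Finset ℕ,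
        (Summable fun n => |∑ k ∈ K, d n * C n k|) ∧
          (∑' n, |∑ k ∈ K, d n * C n k|) ≤ M)) ∧
    ((∀ x : ℕ → ℝ, (∃ l : ℝ, Tendsto (Atr r s α lam x) atTop (nhds l)) →
        Summable fun n => |d n * x n|) ↔
      (∃ M : ℝ, ∀ K : Finset ℕ,
        (Summable fun n => |∑ k ∈ K, d n * C n k|) ∧
          (∑' n, |∑ k ∈ K, d n * C n k|) ≤ M)) ∧
    ((∀ x : ℕ → ℝ, Tendsto (Atr r s α lam x) atTop (nhds 0) →
        Summable fun n => |d n * x n|) ↔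
      (∃ M : ℝ, ∀ K : Finset ℕ,
        (Summable fun n => |∑ k ∈ K, d n * C n k|) ∧
          (∑' n, |∑ k ∈ K, d n * C n k|) ≤ M)) :=
  alpha_duals_general r s α lam C hCtri hAC hCA d
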